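/- arXiv:1009.0377 — 7 statements merged into one kernel-verified Lean document; each statement's English description precedes it below -/
import Mathlib

section
/- Let 0 < m ≤ B and suppose every bid satisfies m ≤ x_i ≤ B for i = 1,…,N, with N·m > B. Then the total allocated resource satisfies |∑_{i=1}^N Q_i(x) − C| ≤ C·(B+ω)/(N·m − B); in particular ∑_{i=1}^N Q_i(x) → C as N → ∞ when bids stay in [m,B] (asymptotic efficiency part of Theorem 1). -/
/-- Auction mechanism `M^a`: asymptotic efficiency part of Theorem 1.
If all bids lie in `[m, B]` with `0 < m ≤ B` and `N·m > B`, then the total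
allocated resource `∑ i, Q_i(x)`, with `Q_i(x) = C·x_i/(∑_{j≠i} x_j + ω)`,
satisfies `|∑ i, Q_i(x) - C| ≤ C·(B+ω)/(N·m - B)`; in particular it tends
to `C` as `N → ∞`. -/
theorem auction_asymptotic_efficiency {N : ℕ} (x : Fin N → ℝ) (C ω m B : ℝ)
    (hC : 0 < C) (hω : 0 < ω) (hm : 0 < m) (hmB : m ≤ B)
    (hx : ∀ i, m ≤ x i ∧ x i ≤ B) (hN : B < (N : ℝ) * m) :
    |(∑ i, C * x i / ((∑ j ∈ Finset.univ.erase i, x j) + ω)) - C| ≤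
      C * (B + ω) / ((N : ℝ) * m - B) := by
  set S := ∑ j, x j with hS
  have hSlo : (N : ℝ) * m ≤ S := by
    calc (N : ℝ) * m = ∑ _i : Fin N, m := by simp [mul_comm]
    _ ≤ S := Finset.sum_le_sum (fun i _ => (hx i).1)
  have hD : 0 < (N : ℝ) * m - B := by linarith
  have hP : 0 < S - B + ω := by linarith
  have hQ : 0 < S + ω := by linarith
  have hsum : (∑ i, C * x i / ((∑ j ∈ Finset.univ.erase i, x j) + ω))
      = C * ∑ i, x i / (S - x i + ω) := by
    rw [Finset.mul_sum]
    refine Finset.sum_congr rfl fun i _ => ?_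
    rw [Finset.sum_erase_eq_sub (Finset.mem_univ i), mul_div_assoc]
  rw [hsum]
  set T := ∑ i, x i / (S - x i + ω) with hT
  have hTub : T ≤ S / (S - B + ω) := by
    have step : T ≤ ∑ i : Fin N, x i / (S - B + ω) := by
      refine Finset.sum_le_sum fun i _ => ?_
      have h2 := (hx i).2
      have h1 := (hx i).1
      gcongr <;> linarith
    calc T ≤ ∑ i : Fin N, x i / (S - B + ω) := step
    _ = S / (S - B + ω) := (Finset.sum_div _ _ _).symm
  have hTlb : S / (S + ω) ≤ T := by
    have step : (∑ i : Fin N, x i / (S + ω)) ≤ T := by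
      refine Finset.sum_le_sum fun i _ => ?_
      have h1 := (hx i).1
      have h2 := (hx i).2
      gcongr <;> linarith
    calc S / (S + ω) = ∑ i : Fin N, x i / (S + ω) := Finset.sum_div _ _ _
    _ ≤ T := step
  have h1 : T - 1 ≤ (B + ω) / ((N : ℝ) * m - B) := by
    have e1 : S / (S - B + ω) - 1 = (B - ω) / (S - B + ω) := by
      field_simp
      ring
    have e2 : (B - ω) / (S - B + ω) ≤ (B + ω) / ((N : ℝ) * m - B) := by
      rw [div_le_div_iff₀ hP hD]
      nlinarith [mul_nonneg hω.le hD.le, mul_nonneg hω.le (by linarith : (0:ℝ) ≤ B + ω)]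
    linarith
  have h2 : 1 - T ≤ (B + ω) / ((N : ℝ) * m - B) := by
    have e1 : 1 - S / (S + ω) = ω / (S + ω) := by
      field_simp
      ring
    have e2 : ω / (S + ω) ≤ (B + ω) / ((N : ℝ) * m - B) := by
      rw [div_le_div_iff₀ hQ hD]
      nlinarith [mul_nonneg hω.le (by linarith : (0:ℝ) ≤ B)]
    linarith
  rw [abs_le]
  have hmul1 : C * (T - 1) ≤ C * ((B + ω) / ((N : ℝ) * m - B)) :=
    mul_le_mul_of_nonneg_left h1 hC.le
  have hmul2 : C * (1 - T) ≤ C * ((B + ω) / ((N : ℝ) * m - B)) :=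
    mul_le_mul_of_nonneg_left h2 hC.le
  rw [mul_div_assoc]
  constructor <;> nlinarith
end

section
/- Suppose player i has logarithmic utility U_i(Q_i) = α_i·log(Q_i) with α_i > 0. Then for any fixed bids x_{-i} ∈ ℝ_{>0}^{N−1} of the other players, the truthful bid x_i = α_i is optimal: for every δ > −α_i, J_i(α_i + δ, x_{-i}) − J_i(α_i, x_{-i}) = δ − α_i·log(1 + δ/α_i) ≥ 0, with equality only at δ = 0 (Corollary 1, strategy-proofness of M^a with logarithmic utilities). -/
/-- Corollary 1: strategy-proofness of the auction mechanism `M^a` with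
logarithmic utility `U_i(Q_i) = α·log Q_i`, `α > 0`. With the other bids
fixed, the cost is `J(b) = b - α·log(C·b/(∑_{j≠i} x_j + ω))`, and for every
deviation `δ > -α` from the truthful bid `b = α` one has
`J(α+δ) - J(α) = δ - α·log(1 + δ/α) ≥ 0`, with equality only at `δ = 0`. -/
theorem auction_log_strategy_proof {N : ℕ} (i : Fin N) (x : Fin N → ℝ)
    (hx : ∀ j, 0 < x j) (C ω : ℝ) (hC : 0 < C) (hω : 0 < ω) (α : ℝ) (hα : 0 < α) :
    ∀ δ : ℝ, -α < δ →
      (((α + δ) - α * Real.log (C * (α + δ) / ((∑ j ∈ Finset.univ.erase i, x j) + ω))) -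
        (α - α * Real.log (C * α / ((∑ j ∈ Finset.univ.erase i, x j) + ω))) =
          δ - α * Real.log (1 + δ / α)) ∧
      0 ≤ δ - α * Real.log (1 + δ / α) ∧
      (δ - α * Real.log (1 + δ / α) = 0 → δ = 0) := by
  intro δ hδ
  set S := (∑ j ∈ Finset.univ.erase i, x j) + ω with hS
  have hSpos : 0 < S := by
    have : 0 ≤ ∑ j ∈ Finset.univ.erase i, x j :=
      Finset.sum_nonneg fun j _ => (hx j).le
    linarith
  have hαδ : 0 < α + δ := by linarith
  have hratio : (1 : ℝ) + δ / α = (α + δ) / α := by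
    field_simp
  have h1 : 0 < 1 + δ / α := by rw [hratio]; positivity
  have hlog : Real.log (C * (α + δ) / S) - Real.log (C * α / S) =
      Real.log (1 + δ / α) := by
    rw [hratio, Real.log_div (by positivity) (by positivity),
      Real.log_div (by positivity) (by positivity),
      Real.log_mul (by positivity) (by positivity),
      Real.log_mul (by positivity) (by positivity),
      Real.log_div (by positivity) (by positivity)]
    ring
  refine ⟨?_, ?_, ?_⟩
  · have := hlog
    nlinarith [hlog]
  · have hle : Real.log (1 + δ / α) ≤ (1 + δ / α) - 1 :=
      Real.log_le_sub_one_of_pos h1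
    have : α * Real.log (1 + δ / α) ≤ α * ((1 + δ / α) - 1) :=
      mul_le_mul_of_nonneg_left hle hα.le
    have hsimp : α * ((1 + δ / α) - 1) = δ := by field_simp; ring
    linarith [hsimp ▸ this]
  · intro h
    by_contra hne
    have hne1 : (1 : ℝ) + δ / α ≠ 1 := by
      intro hEq
      apply hne
      have : δ / α = 0 := by linarith
      field_simp at this
      simpa using this
    have hlt : Real.log (1 + δ / α) < (1 + δ / α) - 1 :=
      Real.log_lt_sub_one_of_pos h1 hne1
    have : α * Real.log (1 + δ / α) < α * ((1 + δ / α) - 1) :=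
      mul_lt_mul_of_pos_left hlt hα
    have hsimp : α * ((1 + δ / α) - 1) = δ := by field_simp; ring
    linarith [hsimp ▸ this]
end

section
/- Suppose every player i has logarithmic utility U_i(Q_i) = α_i·log(Q_i) with α_i > 0. Then for each i and each fixed x_{-i} ∈ ℝ_{>0}^{N−1}, the map x_i ↦ J_i(x_i, x_{-i}) has the unique minimizer x_i = α_i on (0,∞); consequently the bid vector x^* = (α_1,…,α_N) is the unique Nash equilibrium of the game, i.e. the unique x^* ∈ ℝ_{>0}^N such that for every i, x_i^* minimizes x_i ↦ J_i(x_i, x_{-i}^*). -/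
/-- Player `i`'s cost in the auction mechanism `M^a` with logarithmic utilities:
`J_i(x) = x_i - α_i·log(C·x_i/(∑_{j≠i} x_j + ω))`. -/
noncomputable def auctionLogCost {N : ℕ} (C ω : ℝ) (α : Fin N → ℝ)
    (i : Fin N) (x : Fin N → ℝ) : ℝ :=
  x i - α i * Real.log (C * x i / ((∑ j ∈ Finset.univ.erase i, x j) + ω))

lemma sum_erase_update {N : ℕ} (x : Fin N → ℝ) (i : Fin N) (c : ℝ) :
    ∑ j ∈ Finset.univ.erase i, Function.update x i c j
      = ∑ j ∈ Finset.univ.erase i, x j :=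
  Finset.sum_congr rfl fun j hj =>
    Function.update_of_ne (Finset.ne_of_mem_erase hj) _ _

lemma cost_update {N : ℕ} (C ω : ℝ) (α : Fin N → ℝ) (i : Fin N)
    (x : Fin N → ℝ) (b : ℝ) :
    auctionLogCost C ω α i (Function.update x i b)
      = b - α i * Real.log (C * b / ((∑ j ∈ Finset.univ.erase i, x j) + ω)) := by
  unfold auctionLogCost
  rw [Function.update_self, sum_erase_update]

lemma log_cost_expand (a C T t : ℝ) (hC : 0 < C) (hT : 0 < T) (ht : 0 < t) :
    t - a * Real.log (C * t / T)
      = (t - a * Real.log t) - a * (Real.log C - Real.log T) := by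
  rw [Real.log_div (by positivity) (ne_of_gt hT), Real.log_mul (ne_of_gt hC) (ne_of_gt ht)]
  ring

lemma key_le {a b : ℝ} (ha : 0 < a) (hb : 0 < b) :
    a - a * Real.log a ≤ b - a * Real.log b := by
  have h := Real.log_le_sub_one_of_pos (x := b / a) (by positivity)
  rw [Real.log_div (ne_of_gt hb) (ne_of_gt ha)] at h
  have h2 := mul_le_mul_of_nonneg_left h ha.le
  have hab : a * (b / a - 1) = b - a := by field_simp
  rw [hab, mul_sub] at h2
  linarith

lemma key_lt {a b : ℝ} (ha : 0 < a) (hb : 0 < b) (hne : b ≠ a) :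
    a - a * Real.log a < b - a * Real.log b := by
  have hba : b / a ≠ 1 := by
    intro h; exact hne (by field_simp at h; linarith)
  have h := Real.log_lt_sub_one_of_pos (x := b / a) (by positivity) hba
  rw [Real.log_div (ne_of_gt hb) (ne_of_gt ha)] at h
  have h2 := mul_lt_mul_of_pos_left h ha
  have hab : a * (b / a - 1) = b - a := by field_simp
  rw [hab, mul_sub] at h2
  linarith

/-- In the auction mechanism `M^a` with logarithmic utilities
`U_i = α_i·log Q_i`, `α_i > 0`: for each player `i` and any fixed positive
bids of the others, the truthful bid `x_i = α_i` is the unique minimizer of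
its own cost on `(0,∞)`; consequently `x* = α` is the unique Nash
equilibrium of the bidding game. -/
theorem auction_log_unique_nash {N : ℕ} (C ω : ℝ) (hC : 0 < C) (hω : 0 < ω)
    (α : Fin N → ℝ) (hα : ∀ i, 0 < α i) :
    (∀ (i : Fin N) (x : Fin N → ℝ), (∀ j, 0 < x j) →
      ∀ b : ℝ, 0 < b → b ≠ α i →
        auctionLogCost C ω α i (Function.update x i (α i)) <
          auctionLogCost C ω α i (Function.update x i b)) ∧
    (∀ i : Fin N, ∀ b : ℝ, 0 < b →
      auctionLogCost C ω α i α ≤ auctionLogCost C ω α i (Function.update α i b)) ∧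
    (∀ x : Fin N → ℝ, (∀ j, 0 < x j) →
      (∀ i : Fin N, ∀ b : ℝ, 0 < b →
        auctionLogCost C ω α i x ≤ auctionLogCost C ω α i (Function.update x i b)) →
      x = α) := by
  have hT : ∀ (i : Fin N) (x : Fin N → ℝ), (∀ j, 0 < x j) →
      0 < (∑ j ∈ Finset.univ.erase i, x j) + ω := fun i x hx => by
    have : 0 ≤ ∑ j ∈ Finset.univ.erase i, x j :=
      Finset.sum_nonneg fun j _ => (hx j).le
    linarith
  have main : ∀ (i : Fin N) (x : Fin N → ℝ), (∀ j, 0 < x j) →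
      ∀ b : ℝ, 0 < b → b ≠ α i →
        auctionLogCost C ω α i (Function.update x i (α i)) <
          auctionLogCost C ω α i (Function.update x i b) := by
    intro i x hx b hb hne
    rw [cost_update, cost_update,
      log_cost_expand _ _ _ _ hC (hT i x hx) (hα i),
      log_cost_expand _ _ _ _ hC (hT i x hx) hb]
    exact sub_lt_sub_right (key_lt (hα i) hb hne) _
  refine ⟨main, fun i b hb => ?_, fun x hx hmin => ?_⟩
  · have hx : auctionLogCost C ω α i α
        = auctionLogCost C ω α i (Function.update α i (α i)) := by
      rw [Function.update_eq_self]
    rw [hx, cost_update, cost_update,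
      log_cost_expand _ _ _ _ hC (hT i α hα) (hα i),
      log_cost_expand _ _ _ _ hC (hT i α hα) hb]
    exact sub_le_sub_right (key_le (hα i) hb) _
  · funext i
    by_contra hne
    have h1 := main i x hx (x i) (hx i) hne
    rw [Function.update_eq_self] at h1
    have h2 := hmin i (α i) (hα i)
    exact absurd (lt_of_le_of_lt h2 h1) (lt_irrefl _)
end

section
/- Let α_i > 0 for i = 1,…,N, C > 0, and S = ∑_j α_j. If player i reports the distorted parameter α_i + δ with −S < δ < 0 while others report truthfully, the new price is P̃ = (S+δ)/C, the player's best response to P̃ is x̃_i = α_i·C/(S+δ), and its realized cost satisfies J̃_i − J_i = α_i·log((S+δ)/S) < 0, where J_i = α_i − α_i·log(α_i·C/S) is the cost under truthful reporting. Hence the direct pricing mechanism, in which the designer computes the price P = ∑_j α_j/C from reported parameters, is not strategy-proof. -/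
/-- The direct pricing mechanism for logarithmic utilities is not
strategy-proof. With `S = ∑_j α_j`, if player `i` reports `α_i + δ` for
`-S < δ < 0` while others are truthful, the new price is `P̃ = (S+δ)/C`, the
player's best response to `P̃` is `x̃_i = α_i·C/(S+δ)`, and the realized cost
drops: `J̃_i - J_i = α_i·log((S+δ)/S) < 0`, where
`J_i = α_i - α_i·log(α_i·C/S)` is the truthful cost. -/
theorem direct_pricing_not_strategy_proof {N : ℕ} (α : Fin N → ℝ)
    (hα : ∀ j, 0 < α j) (C : ℝ) (hC : 0 < C) (i : Fin N) (δ : ℝ)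
    (hδ₁ : -(∑ j, α j) < δ) (hδ₂ : δ < 0) :
    (∀ b : ℝ, 0 < b →
      ((∑ j, α j) + δ) / C * (α i * C / ((∑ j, α j) + δ)) -
          α i * Real.log (α i * C / ((∑ j, α j) + δ)) ≤
        ((∑ j, α j) + δ) / C * b - α i * Real.log b) ∧
    (((∑ j, α j) + δ) / C * (α i * C / ((∑ j, α j) + δ)) -
          α i * Real.log (α i * C / ((∑ j, α j) + δ)) -
        (α i - α i * Real.log (α i * C / (∑ j, α j))) =
      α i * Real.log (((∑ j, α j) + δ) / (∑ j, α j))) ∧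
    α i * Real.log (((∑ j, α j) + δ) / (∑ j, α j)) < 0 := by
  set S := ∑ j, α j with hS
  have hSpos : 0 < S := Finset.sum_pos (fun j _ => hα j) ⟨i, Finset.mem_univ i⟩
  have ha : 0 < α i := hα i
  have hSd : 0 < S + δ := by linarith
  have hx0 : 0 < α i * C / (S + δ) := by positivity
  have hpx0 : (S + δ) / C * (α i * C / (S + δ)) = α i := by
    field_simp
  refine ⟨?_, ?_, ?_⟩
  · intro b hb
    have hlog : Real.log (b / (α i * C / (S + δ))) ≤ b / (α i * C / (S + δ)) - 1 :=
      Real.log_le_sub_one_of_pos (by positivity)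
    rw [Real.log_div (ne_of_gt hb) (ne_of_gt hx0)] at hlog
    have h2 : α i * (Real.log b - Real.log (α i * C / (S + δ))) ≤
        α i * (b / (α i * C / (S + δ)) - 1) :=
      mul_le_mul_of_nonneg_left hlog ha.le
    have h3 : α i * (b / (α i * C / (S + δ))) = (S + δ) / C * b := by
      field_simp
    nlinarith [hpx0, h3]
  · rw [hpx0, Real.log_div (by positivity) (ne_of_gt hSd),
      Real.log_div (by positivity) (ne_of_gt hSpos),
      Real.log_div (ne_of_gt hSd) (ne_of_gt hSpos)]
    ring
  · have h1 : (S + δ) / S < 1 := by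
      rw [div_lt_one hSpos]; linarith
    have h2 : Real.log ((S + δ) / S) < 0 :=
      Real.log_neg (by positivity) h1
    exact mul_neg_of_pos_of_neg ha h2
end

section
/- Let α_i > 0 for i = 1,…,N, C > 0, κ > 0, and define on ℝ_{>0}^N × ℝ the Lyapunov function V_L(x,λ) = (1/2)(∑_i x_i − C)^2 + (1/2)∑_i (α_i/x_i − λ)^2 and the vector field f(x,λ) with components f_{x_i}(x,λ) = κ·(α_i/x_i − λ) and f_λ(x,λ) = κ·(∑_i x_i − C). Then the derivative of V_L along f satisfies ∇V_L(x,λ) · f(x,λ) = −κ·∑_i (α_i/x_i^2)·(α_i/x_i − λ)^2 ≤ 0 for all x ∈ ℝ_{>0}^N and λ ∈ ℝ. -/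
set_option maxHeartbeats 1000000


set_option maxHeartbeats 1000000 in
private lemma lyap_aux {N : ℕ} (α : Fin N → ℝ) (C : ℝ) (x v : Fin N → ℝ) (l w : ℝ)
    (D : ((Fin N → ℝ) × ℝ) →L[ℝ] ℝ)
    (hD' : HasFDerivAt
      (fun p : (Fin N → ℝ) × ℝ =>
        (1 / 2) * ((∑ i, p.1 i) - C) ^ 2 + (1 / 2) * ∑ i, (α i / p.1 i - p.2) ^ 2)
      D ((fun i => x i + (0:ℝ) * v i : Fin N → ℝ), l + (0:ℝ) * w))
    (hc : HasDerivAt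
        (fun t : ℝ => ((fun i => x i + t * v i : Fin N → ℝ), l + t * w))
        ((v : Fin N → ℝ), w) 0) :
    HasDerivAt
        (fun t : ℝ =>
          (1 / 2) * ((∑ i, (x i + t * v i)) - C) ^ 2
            + (1 / 2) * ∑ i, (α i / (x i + t * v i) - (l + t * w)) ^ 2)
        (D (v, w)) 0 := by
  have h := hD'.comp_hasDerivAt 0 hc
  exact h

/-- Lyapunov analysis of the continuous-time iterative pricing mechanism.
For `V_L(x,λ) = ½(∑ x_i - C)² + ½∑(α_i/x_i - λ)²` and the vector field
`f_{x_i} = κ(α_i/x_i - λ)`, `f_λ = κ(∑ x_i - C)`, the derivative of `V_L`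
along `f` equals `-κ·∑ (α_i/x_i²)(α_i/x_i - λ)² ≤ 0` at every positive `x`
and real `λ`. -/
theorem lyapunov_derivative_nonpos {N : ℕ} (α : Fin N → ℝ) (hα : ∀ i, 0 < α i)
    (C κ : ℝ) (hκ : 0 < κ) (x : Fin N → ℝ) (hx : ∀ i, 0 < x i) (l : ℝ)
    (D : ((Fin N → ℝ) × ℝ) →L[ℝ] ℝ)
    (hD : HasFDerivAt
      (fun p : (Fin N → ℝ) × ℝ =>
        (1 / 2) * ((∑ i, p.1 i) - C) ^ 2 + (1 / 2) * ∑ i, (α i / p.1 i - p.2) ^ 2)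
      D (x, l)) :
    D (fun i => κ * (α i / x i - l), κ * ((∑ i, x i) - C)) =
        -κ * ∑ i, (α i / (x i) ^ 2) * (α i / x i - l) ^ 2 ∧
      -κ * ∑ i, (α i / (x i) ^ 2) * (α i / x i - l) ^ 2 ≤ 0 := by
  obtain ⟨v, hv⟩ : ∃ v : Fin N → ℝ, v = fun i => κ * (α i / x i - l) := ⟨_, rfl⟩
  obtain ⟨w, hw⟩ : ∃ w : ℝ, w = κ * ((∑ i, x i) - C) := ⟨_, rfl⟩
  rw [show (fun i => κ * (α i / x i - l)) = v from hv.symm,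
    show κ * ((∑ i, x i) - C) = w from hw.symm]
  have hxne : ∀ i, x i ≠ 0 := fun i => (hx i).ne'
  constructor
  · -- the curve c t = (x + t v, l + t w)
    have hc : HasDerivAt
        (fun t : ℝ => ((fun i => x i + t * v i : Fin N → ℝ), l + t * w))
        ((v : Fin N → ℝ), w) 0 := by
      apply HasDerivAt.prodMk
      · rw [hasDerivAt_pi]
        intro i
        simpa using ((hasDerivAt_id (0 : ℝ)).mul_const (v i)).const_add (x i)
      · simpa using ((hasDerivAt_id (0 : ℝ)).mul_const w).const_add l
    have hc0 : ((fun i => x i + (0:ℝ) * v i : Fin N → ℝ), l + (0:ℝ) * w)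
        = ((x, l) : (Fin N → ℝ) × ℝ) := by
      ext i <;> simp
    have hD' : HasFDerivAt
        (fun p : (Fin N → ℝ) × ℝ =>
          (1 / 2) * ((∑ i, p.1 i) - C) ^ 2 + (1 / 2) * ∑ i, (α i / p.1 i - p.2) ^ 2)
        D ((fun i => x i + (0:ℝ) * v i : Fin N → ℝ), l + (0:ℝ) * w) := by
      rw [hc0]; exact hD
    have h1 : HasDerivAt
        (fun t : ℝ =>
          (1 / 2) * ((∑ i, (x i + t * v i)) - C) ^ 2
            + (1 / 2) * ∑ i, (α i / (x i + t * v i) - (l + t * w)) ^ 2)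
        (D (v, w)) 0 := lyap_aux α C x v l w D hD' hc
    -- explicit computation of the same derivative
    have hlin : ∀ i, HasDerivAt (fun t : ℝ => x i + t * v i) (v i) 0 := fun i => by
      simpa using ((hasDerivAt_id (0 : ℝ)).mul_const (v i)).const_add (x i)
    have hwlin : HasDerivAt (fun t : ℝ => l + t * w) w 0 := by
      simpa using ((hasDerivAt_id (0 : ℝ)).mul_const w).const_add l
    have hA : HasDerivAt (fun t : ℝ => (1 / 2) * ((∑ i, (x i + t * v i)) - C) ^ 2)
        ((1 / 2) * (2 * (((∑ i, x i) - C) ^ 1) * (∑ i, v i))) 0 := by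
      have hs : HasDerivAt (fun t : ℝ => (∑ i, (x i + t * v i)) - C) (∑ i, v i) 0 :=
        (HasDerivAt.fun_sum (fun i _ => hlin i)).sub_const C
      have := (hs.pow 2).const_mul (1 / 2 : ℝ)
      simpa using this
    have hB : ∀ i ∈ Finset.univ, HasDerivAt
        (fun t : ℝ => (α i / (x i + t * v i) - (l + t * w)) ^ 2)
        (2 * ((α i / x i - l) ^ 1) * (-(α i * v i) / (x i) ^ 2 - w)) 0 := by
      intro i _
      have hx0 : x i + (0:ℝ) * v i ≠ 0 := by simpa using hxne i
      have hdiv := (hasDerivAt_const (0:ℝ) (α i)).fun_div (hlin i) hx0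
      have := (hdiv.fun_sub hwlin).fun_pow 2
      simp only [zero_mul, zero_sub, zero_add, add_zero] at this
      exact this.congr_deriv (by norm_num)
    have h2 : HasDerivAt
        (fun t : ℝ =>
          (1 / 2) * ((∑ i, (x i + t * v i)) - C) ^ 2
            + (1 / 2) * ∑ i, (α i / (x i + t * v i) - (l + t * w)) ^ 2)
        ((1 / 2) * (2 * (((∑ i, x i) - C) ^ 1) * (∑ i, v i))
          + (1 / 2) * ∑ i, 2 * ((α i / x i - l) ^ 1) * (-(α i * v i) / (x i) ^ 2 - w)) 0 := by
      exact hA.add ((HasDerivAt.fun_sum hB).const_mul (1 / 2 : ℝ))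
    have heq := h1.unique h2
    rw [heq]
    -- algebraic simplification
    rw [pow_one]
    have : (1 / 2 : ℝ) * (2 * ((∑ i, x i) - C) * (∑ i, v i))
        = ∑ i, ((∑ j, x j) - C) * v i := by
      rw [show (1 / 2 : ℝ) * (2 * ((∑ i, x i) - C) * (∑ i, v i))
          = ((∑ i, x i) - C) * (∑ i, v i) by ring, Finset.mul_sum]
    rw [this]
    have : (1 / 2 : ℝ) * ∑ i, 2 * ((α i / x i - l) ^ 1) * (-(α i * v i) / (x i) ^ 2 - w)
        = ∑ i, (α i / x i - l) * (-(α i * v i) / (x i) ^ 2 - w) := by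
      rw [Finset.mul_sum]
      refine Finset.sum_congr rfl fun i _ => by ring
    rw [this, ← Finset.sum_add_distrib, neg_mul, Finset.mul_sum,
      ← Finset.sum_neg_distrib]
    refine Finset.sum_congr rfl fun i _ => ?_
    have hxi := hxne i
    rw [hv, hw]
    field_simp
    ring
  · rw [neg_mul, neg_nonpos]
    apply mul_nonneg hκ.le
    refine Finset.sum_nonneg fun i _ => mul_nonneg ?_ (sq_nonneg _)
    exact div_nonneg (hα i).le (sq_nonneg _)
end

section
/- Let N ≥ 1, σ > 0, and x ∈ ℝ_{≥0}^N, and set γ_i = x_i/(∑_{j≠i} x_j + σ) for each i. Then the N×N matrix A with entries A_{ii} = 1 and A_{ij} = −γ_j for j ≠ i is invertible; indeed det A = (∏_j (1+γ_j))·(1 − ∑_j γ_j/(1+γ_j)) and ∑_j γ_j/(1+γ_j) = ∑_j x_j/(∑_k x_k + σ) < 1, so det A > 0 (invertibility of the price-update matrix in the pricing mechanism M^p of Theorem 3). -/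
/-- Invertibility of the price-update matrix in the pricing mechanism `M^p`
(Theorem 3). For received powers `x ≥ 0`, noise `σ > 0` and SIRs
`γ_i = x_i/(∑_{j≠i} x_j + σ)`, the matrix `A` with `A_{ii} = 1`,
`A_{ij} = -γ_j` (`j ≠ i`) satisfies
`det A = (∏_j (1+γ_j))·(1 - ∑_j γ_j/(1+γ_j))`, where
`∑_j γ_j/(1+γ_j) = ∑_j x_j/(∑_k x_k + σ) < 1`; hence `det A > 0` and `A`
is invertible. -/
theorem price_matrix_invertible {N : ℕ} (x : Fin N → ℝ) (hx : ∀ i, 0 ≤ x i)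
    (σ : ℝ) (hσ : 0 < σ)
    (γ : Fin N → ℝ)
    (hγ : γ = fun i => x i / ((∑ j ∈ Finset.univ.erase i, x j) + σ))
    (A : Matrix (Fin N) (Fin N) ℝ)
    (hA : A = Matrix.of fun i j => if i = j then (1 : ℝ) else -γ j) :
    A.det = (∏ j, (1 + γ j)) * (1 - ∑ j, γ j / (1 + γ j)) ∧
    (∑ j, γ j / (1 + γ j)) = ∑ j, x j / ((∑ k, x k) + σ) ∧
    (∑ j, x j / ((∑ k, x k) + σ)) < 1 ∧
    0 < A.det ∧
    IsUnit A := by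
  have hdenom : ∀ i : Fin N, 0 < (∑ j ∈ Finset.univ.erase i, x j) + σ := by
    intro i
    have : 0 ≤ ∑ j ∈ Finset.univ.erase i, x j :=
      Finset.sum_nonneg fun j _ => hx j
    linarith
  have hγnn : ∀ i, 0 ≤ γ i := by
    intro i; rw [hγ]
    exact div_nonneg (hx i) (hdenom i).le
  have h1γ : ∀ i, 0 < 1 + γ i := fun i => by linarith [hγnn i]
  have hS : ∀ i : Fin N, (∑ j ∈ Finset.univ.erase i, x j) + x i = ∑ k, x k := by
    intro i
    rw [add_comm, Finset.add_sum_erase _ _ (Finset.mem_univ i)]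
  have hSσ : 0 < (∑ k, x k) + σ := by
    have : 0 ≤ ∑ k, x k := Finset.sum_nonneg fun j _ => hx j
    linarith
  have hkey : ∀ i, γ i / (1 + γ i) = x i / ((∑ k, x k) + σ) := by
    intro i
    have hd := hdenom i
    rw [hγ]
    simp only
    have h1 : 1 + x i / ((∑ j ∈ Finset.univ.erase i, x j) + σ)
        = ((∑ k, x k) + σ) / ((∑ j ∈ Finset.univ.erase i, x j) + σ) := by
      rw [eq_div_iff hd.ne', add_mul, one_mul, div_mul_cancel₀ _ hd.ne']
      linarith [hS i]
    rw [h1, div_div_eq_mul_div, div_mul_cancel₀ _ hd.ne']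
  -- sum identity
  have hsum : (∑ j, γ j / (1 + γ j)) = ∑ j, x j / ((∑ k, x k) + σ) :=
    Finset.sum_congr rfl fun j _ => hkey j
  -- sum < 1
  have hlt : (∑ j, x j / ((∑ k, x k) + σ)) < 1 := by
    rw [← Finset.sum_div, div_lt_one hSσ]
    linarith
  -- determinant formula via matrix determinant lemma
  have hdet : A.det = (∏ j, (1 + γ j)) * (1 - ∑ j, γ j / (1 + γ j)) := by
    have hfact : A = Matrix.diagonal (fun i => 1 + γ i) *
        (1 + Matrix.replicateCol Unit (fun i => -(1 + γ i)⁻¹) * Matrix.replicateRow Unit γ) := by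
      ext i j
      simp only [hA, Matrix.mul_apply, Matrix.diagonal, Matrix.of_apply,
        Matrix.add_apply, Matrix.one_apply, Matrix.replicateCol_apply, Matrix.replicateRow_apply,
        Finset.sum_ite_eq, Finset.mem_univ, if_true]
      by_cases h : i = j
      · subst h
        simp
        field_simp [(h1γ i).ne']
        ring
      · simp [h]
        field_simp [(h1γ i).ne']
    rw [hfact, Matrix.det_mul, Matrix.det_diagonal,
      Matrix.det_one_add_replicateCol_mul_replicateRow]
    congr 1
    simp [dotProduct, div_eq_mul_inv, sub_eq_add_neg]
  have hdetpos : 0 < A.det := by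
    rw [hdet]
    apply mul_pos
    · exact Finset.prod_pos fun j _ => h1γ j
    · have := hlt; rw [← hsum] at this; linarith
  refine ⟨hdet, hsum, hlt, hdetpos, ?_⟩
  rw [Matrix.isUnit_iff_isUnit_det]
  exact isUnit_iff_ne_zero.mpr (ne_of_gt hdetpos)
end

section
/- Let α_i > 0 for i = 1,…,N, σ > 0, C > 0, and suppose x^* ∈ ℝ_{>0}^N satisfies ∑_i x_i^* = C and, for some λ > 0, α_i/x_i^* − ∑_{j≠i} α_j/I_j^* = λ for every i, where I_j^* = ∑_{k≠j} x_k^* + σ. Then x^* maximizes the designer objective ∑_i α_i·log(γ_i(x)) over { x ∈ ℝ_{>0}^N : ∑_i x_i ≤ C }, where γ_i(x) = x_i/(∑_{j≠i} x_j + σ) (sufficiency of the first-order conditions for efficiency in the non-separable pricing mechanism of Theorem 3). -/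
/-- Sufficiency of the first-order conditions for efficiency in the
non-separable pricing mechanism (Theorem 3). If the positive point `x*`
satisfies `∑ x*_i = C` and, for some `λ > 0`,
`α_i/x*_i - ∑_{j≠i} α_j/I*_j = λ` for every `i`, where
`I*_j = ∑_{k≠j} x*_k + σ`, then `x*` maximizes the designer objective
`∑ α_i·log(γ_i(x))`, `γ_i(x) = x_i/(∑_{j≠i} x_j + σ)`, over all positive `x`
with `∑ x_i ≤ C`. -/
theorem nonseparable_foc_sufficient {N : ℕ} (α : Fin N → ℝ) (hα : ∀ i, 0 < α i)
    (σ C : ℝ) (hσ : 0 < σ) (hC : 0 < C)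
    (xs : Fin N → ℝ) (hxs : ∀ i, 0 < xs i) (hsum : ∑ i, xs i = C)
    (l : ℝ) (hl : 0 < l)
    (hfoc : ∀ i, α i / xs i -
      (∑ j ∈ Finset.univ.erase i, α j / ((∑ k ∈ Finset.univ.erase j, xs k) + σ)) = l) :
    ∀ x : Fin N → ℝ, (∀ i, 0 < x i) → (∑ i, x i) ≤ C →
      (∑ i, α i * Real.log (x i / ((∑ j ∈ Finset.univ.erase i, x j) + σ))) ≤
        ∑ i, α i * Real.log (xs i / ((∑ j ∈ Finset.univ.erase i, xs j) + σ)) := by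
  intro x hx hxle
  classical
  set Δ : Fin N → ℝ := fun j => Real.log (x j) - Real.log (xs j) with hΔdef
  set Is : Fin N → ℝ := fun i => (∑ k ∈ Finset.univ.erase i, xs k) + σ with hIsdef
  set I : Fin N → ℝ := fun i => (∑ k ∈ Finset.univ.erase i, x k) + σ with hIdef
  have hIs : ∀ i, (0:ℝ) < Is i := by
    intro i
    have h : (0:ℝ) ≤ ∑ k ∈ Finset.univ.erase i, xs k :=
      Finset.sum_nonneg fun k _ => (hxs k).le
    simp only [hIsdef]; linarith
  have hI : ∀ i, (0:ℝ) < I i := by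
    intro i
    have h : (0:ℝ) ≤ ∑ k ∈ Finset.univ.erase i, x k :=
      Finset.sum_nonneg fun k _ => (hx k).le
    simp only [hIdef]; linarith
  -- key convexity inequality: log (I i) ≥ log (Is i) + (∑_{j≠i} xs_j Δ_j)/Is i
  have key : ∀ i, Real.log (Is i)
      + (∑ j ∈ Finset.univ.erase i, xs j * Δ j) / Is i ≤ Real.log (I i) := by
    intro i
    set m : ℝ := (∑ j ∈ Finset.univ.erase i, xs j * Δ j) / Is i with hmdef
    have hS : 0 < Is i := hIs i
    have hxj : ∀ j, xs j * Real.exp (Δ j) = x j := by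
      intro j
      have : Real.exp (Δ j) = x j / xs j := by
        simp only [hΔdef]
        rw [Real.exp_sub, Real.exp_log (hx j), Real.exp_log (hxs j)]
      rw [this]
      have hne := ne_of_gt (hxs j)
      field_simp
    have hmain : Is i * Real.exp m ≤ I i := by
      have h1 : ∀ j ∈ Finset.univ.erase i,
          xs j * (Real.exp m * (1 + (Δ j - m))) ≤ x j := by
        intro j _
        have he : 1 + (Δ j - m) ≤ Real.exp (Δ j - m) := by
          have := Real.add_one_le_exp (Δ j - m); linarith
        have h2 : Real.exp m * (1 + (Δ j - m)) ≤ Real.exp (Δ j) := by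
          have h3 : Real.exp m * (1 + (Δ j - m)) ≤ Real.exp m * Real.exp (Δ j - m) := by
            nlinarith [Real.exp_pos m]
          rw [← Real.exp_add] at h3
          have : m + (Δ j - m) = Δ j := by ring
          rwa [this] at h3
        calc xs j * (Real.exp m * (1 + (Δ j - m))) ≤ xs j * Real.exp (Δ j) := by
              nlinarith [(hxs j).le]
          _ = x j := hxj j
      have h2 : Real.exp m * (1 - m) ≤ 1 := by
        have ha : 1 - m ≤ Real.exp (-m) := by
          have := Real.add_one_le_exp (-m); linarith
        have hb : Real.exp m * (1 - m) ≤ Real.exp m * Real.exp (-m) :=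
          mul_le_mul_of_nonneg_left ha (Real.exp_pos m).le
        rw [← Real.exp_add, add_neg_cancel, Real.exp_zero] at hb
        exact hb
      have hsum1 : ∑ j ∈ Finset.univ.erase i, xs j * (Real.exp m * (1 + (Δ j - m)))
          ≤ ∑ j ∈ Finset.univ.erase i, x j := Finset.sum_le_sum h1
      have hid : Is i * Real.exp m =
          (∑ j ∈ Finset.univ.erase i, xs j * (Real.exp m * (1 + (Δ j - m))))
          + σ * (Real.exp m * (1 - m)) := by
        have hP : ∑ j ∈ Finset.univ.erase i, xs j * Δ j = m * Is i := by
          simp only [hmdef]; field_simp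
        have : ∑ j ∈ Finset.univ.erase i, xs j * (Real.exp m * (1 + (Δ j - m)))
            = Real.exp m * ((∑ j ∈ Finset.univ.erase i, xs j) * (1 - m)
              + ∑ j ∈ Finset.univ.erase i, xs j * Δ j) := by
          rw [Finset.sum_mul, ← Finset.sum_add_distrib, Finset.mul_sum]
          apply Finset.sum_congr rfl
          intro j _; ring
        rw [this, hP]
        simp only [hIsdef]
        ring
      have hσm : σ * (Real.exp m * (1 - m)) ≤ σ := by nlinarith
      simp only [hIdef]
      linarith
    have hlog := Real.log_le_log (by positivity) hmain
    rw [Real.log_mul (ne_of_gt hS) (Real.exp_ne_zero m), Real.log_exp] at hlog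
    exact hlog
  -- expand logs
  have expandL : ∀ i, α i * Real.log (x i / I i) = α i * Real.log (x i) - α i * Real.log (I i) := by
    intro i
    rw [Real.log_div (ne_of_gt (hx i)) (ne_of_gt (hI i))]; ring
  have expandR : ∀ i, α i * Real.log (xs i / Is i)
      = α i * Real.log (xs i) - α i * Real.log (Is i) := by
    intro i
    rw [Real.log_div (ne_of_gt (hxs i)) (ne_of_gt (hIs i))]; ring
  -- step 1: reduce using key
  have step1 : (∑ i, α i * Real.log (x i / I i)) - (∑ i, α i * Real.log (xs i / Is i))
      ≤ ∑ i, α i * Δ i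
        - ∑ i, (α i / Is i) * (∑ j ∈ Finset.univ.erase i, xs j * Δ j) := by
    have h1 : ∀ i ∈ Finset.univ (α := Fin N),
        α i * Real.log (x i / I i) - α i * Real.log (xs i / Is i)
        ≤ α i * Δ i - (α i / Is i) * (∑ j ∈ Finset.univ.erase i, xs j * Δ j) := by
      intro i _
      have hk := key i
      have h2 := mul_le_mul_of_nonneg_left hk (hα i).le
      rw [mul_add] at h2
      have h3 : α i * ((∑ j ∈ Finset.univ.erase i, xs j * Δ j) / Is i)
          = (α i / Is i) * (∑ j ∈ Finset.univ.erase i, xs j * Δ j) := by ring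
      rw [h3] at h2
      rw [expandL i, expandR i]
      have hΔi : Δ i = Real.log (x i) - Real.log (xs i) := by simp [hΔdef]
      rw [hΔi]
      linarith
    calc (∑ i, α i * Real.log (x i / I i)) - (∑ i, α i * Real.log (xs i / Is i))
        = ∑ i, (α i * Real.log (x i / I i) - α i * Real.log (xs i / Is i)) := by
          rw [Finset.sum_sub_distrib]
      _ ≤ ∑ i, (α i * Δ i - (α i / Is i) * (∑ j ∈ Finset.univ.erase i, xs j * Δ j)) :=
          Finset.sum_le_sum h1
      _ = _ := by rw [Finset.sum_sub_distrib]
  -- step 2: swap double sum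
  have swap : ∑ i, (α i / Is i) * (∑ j ∈ Finset.univ.erase i, xs j * Δ j)
      = ∑ j, (xs j * Δ j) * (∑ i ∈ Finset.univ.erase j, α i / Is i) := by
    have h1 : ∑ i, (α i / Is i) * (∑ j ∈ Finset.univ.erase i, xs j * Δ j)
        = ∑ i, ∑ j ∈ Finset.univ.erase i, (α i / Is i) * (xs j * Δ j) := by
      apply Finset.sum_congr rfl
      intro i _; rw [Finset.mul_sum]
    have h2 : ∑ j, (xs j * Δ j) * (∑ i ∈ Finset.univ.erase j, α i / Is i)
        = ∑ j, ∑ i ∈ Finset.univ.erase j, (α i / Is i) * (xs j * Δ j) := by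
      apply Finset.sum_congr rfl
      intro j _; rw [Finset.mul_sum]; apply Finset.sum_congr rfl; intro i _; ring
    rw [h1, h2]
    apply Finset.sum_comm'
    intro i j
    simp only [Finset.mem_univ, Finset.mem_erase, true_and, and_true]
    exact ⟨fun h => h.symm, fun h => h.symm⟩
  -- step 3: use FOC
  have foc' : ∀ j, α j - xs j * (∑ i ∈ Finset.univ.erase j, α i / Is i) = l * xs j := by
    intro j
    have hne := ne_of_gt (hxs j)
    have h5 : α j / xs j
        = l + ∑ i ∈ Finset.univ.erase j, α i / Is i := by
      have := hfoc j
      simp only [hIsdef]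
      linarith [this]
    rw [div_eq_iff hne] at h5
    nlinarith [h5]
  have step3 : (∑ i, α i * Δ i)
      - (∑ i, (α i / Is i) * (∑ j ∈ Finset.univ.erase i, xs j * Δ j))
      = l * ∑ j, xs j * Δ j := by
    rw [swap, Finset.mul_sum, ← Finset.sum_sub_distrib]
    apply Finset.sum_congr rfl
    intro j _
    have h := foc' j
    linear_combination Δ j * h
  -- step 4: l * ∑ xs_j Δ_j ≤ 0
  have step4 : ∑ j, xs j * Δ j ≤ 0 := by
    have h1 : ∀ j ∈ Finset.univ (α := Fin N), xs j * Δ j ≤ x j - xs j := by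
      intro j _
      have hlog : Real.log (x j / xs j) ≤ x j / xs j - 1 :=
        Real.log_le_sub_one_of_pos (div_pos (hx j) (hxs j))
      have hΔeq : Δ j = Real.log (x j / xs j) := by
        simp only [hΔdef]
        rw [Real.log_div (ne_of_gt (hx j)) (ne_of_gt (hxs j))]
      rw [hΔeq]
      have hne := ne_of_gt (hxs j)
      calc xs j * Real.log (x j / xs j) ≤ xs j * (x j / xs j - 1) :=
            mul_le_mul_of_nonneg_left hlog (hxs j).le
        _ = x j - xs j := by field_simp
    calc ∑ j, xs j * Δ j ≤ ∑ j, (x j - xs j) := Finset.sum_le_sum h1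
      _ = (∑ j, x j) - (∑ j, xs j) := by rw [Finset.sum_sub_distrib]
      _ ≤ 0 := by rw [hsum]; linarith
  have final : l * ∑ j, xs j * Δ j ≤ 0 := by nlinarith [step4, hl.le]
  linarith [step1, step3, final]
end
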